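/- Let (X,p) be a context-free grammar in Greibach normal form and S ∈ P_ω(X*). Then the language assigned to S by the final homomorphism from the grammar automaton equals ⋃_{s ∈ S} { w ∈ A* | s ⇒* w }. -/

import Mathlib

/-!
The final homomorphism `⟦−⟧` respects the algebra of `P_ω(X*)`: it turns unions into unions and,
because `ô` and `(−)_a` obey the Brzozowski product rules, products into products. So interpreting
a sentential form by replacing each nonterminal `x` with `⟦{x}⟧` and each terminal `a` with `{a}`
gives a language that can only shrink along a derivation step (`[] ∈ ⟦{x}⟧` when `x → ε`, and
`a·⟦{w}⟧ ⊆ ⟦{x}⟧` when `x → aw`); a derivation `s ⇒* w` thus puts `w` in `⟦{s}⟧`.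
Conversely, `t ∈ {s}_a` means that `s` derives `a t` by erasing a nullable prefix and firing one
production, and induction on `w` turns `w ∈ ⟦{s}⟧` into a derivation `s ⇒* w`.
-/

/-- Language concatenation `S·T = { st | s ∈ S, t ∈ T }`. -/
def lcat {Y : Type} (S T : Set (List Y)) : Set (List Y) :=
  Set.image2 (· ++ ·) S T

/-- `i : B → P(Y*)`, sending `1` to `{ε}` and `0` to `∅` (Booleans as `Prop`). -/
def iB {Y : Type} (p : Prop) : Set (List Y) := {w | w = [] ∧ p}

section GrammarAutomaton

variable {X A : Type} (o : X → Prop) (δ : X → A → Set (List X))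

/-- Output `ô({s})` of a single word of nonterminals:
`ô({ε}) = 1`, `ô({xw}) = o(x) ∧ ô({w})`. -/
def oWord : List X → Prop
  | [] => True
  | x :: w => o x ∧ oWord w

/-- Derivative `{s}_a` of a single word of nonterminals:
`{ε}_a = ∅`, `{xw}_a = x_a·{w} ∪ i(o(x))·{w}_a`. -/
def dWord : List X → A → Set (List X)
  | [], _ => ∅
  | x :: w, a => lcat (δ x a) {w} ∪ lcat (iB (o x)) (dWord w a)

/-- Output `ô(S) = ⋁_{s ∈ S} ô({s})` of a language of words of nonterminals. -/
def oSet (S : Set (List X)) : Prop := ∃ s ∈ S, oWord o s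

/-- Derivative `S_a = ⋃_{s ∈ S} {s}_a`. -/
def dSet (S : Set (List X)) (a : A) : Set (List X) :=
  ⋃ s ∈ S, dWord o δ s a

/-- Iterated word derivative: `S_ε = S`, `S_{aw} = (S_a)_w`. -/
def dSetWord (S : Set (List X)) : List A → Set (List X)
  | [] => S
  | a :: w => dSetWord (dSet o δ S a) w

/-- One derivation step of the grammar in Greibach normal form determined by
`(o, δ)`: productions are `x → ε` when `o x` holds, and `x → aw` when `w ∈ δ x a`. -/
inductive GStep : List (X ⊕ A) → List (X ⊕ A) → Prop
  | eps (l r : List (X ⊕ A)) (x : X) (h : o x) :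
      GStep (l ++ Sum.inl x :: r) (l ++ r)
  | prod (l r : List (X ⊕ A)) (x : X) (a : A) (w : List X) (h : w ∈ δ x a) :
      GStep (l ++ Sum.inl x :: r) (l ++ Sum.inr a :: w.map Sum.inl ++ r)

/-- Derivability `⇒*`: the reflexive–transitive closure of single derivation steps. -/
def GDerives : List (X ⊕ A) → List (X ⊕ A) → Prop :=
  Relation.ReflTransGen (GStep o δ)

end GrammarAutomaton

section Concatenation

variable {Y : Type}

lemma mem_lcat {S T : Set (List Y)} {w : List Y} :
    w ∈ lcat S T ↔ ∃ u ∈ S, ∃ v ∈ T, u ++ v = w :=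
  Set.mem_image2

lemma lcat_assoc (S T U : Set (List Y)) : lcat (lcat S T) U = lcat S (lcat T U) :=
  Set.image2_assoc List.append_assoc

lemma lcat_union_left (S T U : Set (List Y)) : lcat (S ∪ T) U = lcat S U ∪ lcat T U :=
  Set.image2_union_left

lemma lcat_union_right (S T U : Set (List Y)) : lcat S (T ∪ U) = lcat S T ∪ lcat S U :=
  Set.image2_union_right

lemma lcat_empty_left (T : Set (List Y)) : lcat ∅ T = ∅ :=
  Set.image2_empty_left

lemma lcat_singleton_singleton (u v : List Y) : lcat {u} {v} = {u ++ v} :=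
  Set.image2_singleton

lemma lcat_nil_left (T : Set (List Y)) : lcat {[]} T = T := by
  simp [lcat, Set.image2_singleton_left]

lemma lcat_subset_lcat {S S' T T' : Set (List Y)} (hS : S ⊆ S') (hT : T ⊆ T') :
    lcat S T ⊆ lcat S' T' :=
  Set.image2_subset hS hT

lemma mem_lcat_iB {p : Prop} {T : Set (List Y)} {w : List Y} :
    w ∈ lcat (iB p) T ↔ p ∧ w ∈ T := by
  simp [mem_lcat, iB, and_comm]

lemma iB_true : (iB True : Set (List Y)) = {[]} := by
  ext w; simp [iB]

lemma iB_and (p q : Prop) : (iB (p ∧ q) : Set (List Y)) = lcat (iB p) (iB q) := by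
  ext w
  rw [mem_lcat_iB]
  simp only [iB, Set.mem_ofPred_eq]
  tauto

end Concatenation

section Semantics

variable {X A : Type} {o : X → Prop} {δ : X → A → Set (List X)}

lemma oWord_append (s t : List X) : oWord o (s ++ t) ↔ oWord o s ∧ oWord o t := by
  induction s with
  | nil => simp [oWord]
  | cons x s ih => simp [oWord, ih, and_assoc]

lemma dWord_append (u v : List X) (a : A) :
    dWord o δ (u ++ v) a =
      lcat (dWord o δ u a) {v} ∪ lcat (iB (oWord o u)) (dWord o δ v a) := by
  induction u with
  | nil => simp only [List.nil_append, dWord, oWord, lcat_empty_left, iB_true, lcat_nil_left,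
      Set.empty_union]
  | cons x u ih => simp only [List.cons_append, dWord, oWord, ih, lcat_union_left,
      lcat_union_right, lcat_assoc, lcat_singleton_singleton, iB_and, Set.union_assoc]

lemma dWord_singleton (x : X) (a : A) : dWord o δ [x] a = δ x a := by
  ext t
  simp [dWord, mem_lcat]

lemma mem_dSet {S : Set (List X)} {a : A} {t : List X} :
    t ∈ dSet o δ S a ↔ ∃ s ∈ S, t ∈ dWord o δ s a := by
  simp [dSet]

lemma dSet_singleton (s : List X) (a : A) : dSet o δ {s} a = dWord o δ s a := by
  simp [dSet]

lemma oSet_lcat {S T : Set (List X)} : oSet o (lcat S T) ↔ oSet o S ∧ oSet o T := by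
  simp only [oSet, mem_lcat]
  constructor
  · rintro ⟨_, ⟨s, hs, t, ht, rfl⟩, h⟩
    rw [oWord_append] at h
    exact ⟨⟨s, hs, h.1⟩, ⟨t, ht, h.2⟩⟩
  · rintro ⟨⟨s, hs, hos⟩, ⟨t, ht, hot⟩⟩
    exact ⟨s ++ t, ⟨s, hs, t, ht, rfl⟩, (oWord_append s t).mpr ⟨hos, hot⟩⟩

lemma dSet_lcat (S T : Set (List X)) (a : A) :
    dSet o δ (lcat S T) a = lcat (dSet o δ S a) T ∪ lcat (iB (oSet o S)) (dSet o δ T a) := by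
  ext u
  simp only [Set.mem_union, mem_dSet, mem_lcat_iB, oSet]
  constructor
  · rintro ⟨_, hst, hu⟩
    obtain ⟨s, hs, t, ht, rfl⟩ := mem_lcat.mp hst
    rcases (dWord_append s t a ▸ hu) with h | h
    · obtain ⟨p, hp, _, hv, rfl⟩ := mem_lcat.mp h
      rw [Set.mem_singleton_iff.mp hv]
      exact Or.inl (mem_lcat.mpr ⟨p, mem_dSet.mpr ⟨s, hs, hp⟩, t, ht, rfl⟩)
    · obtain ⟨hos, hu⟩ := mem_lcat_iB.mp h
      exact Or.inr ⟨⟨s, hs, hos⟩, t, ht, hu⟩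
  · rintro (h | ⟨⟨s, hs, hos⟩, t, ht, hu⟩)
    · obtain ⟨p, hp, t, ht, rfl⟩ := mem_lcat.mp h
      obtain ⟨s, hs, hp⟩ := mem_dSet.mp hp
      exact ⟨s ++ t, mem_lcat.mpr ⟨s, hs, t, ht, rfl⟩,
        dWord_append s t a ▸ Or.inl (mem_lcat.mpr ⟨p, hp, t, rfl, rfl⟩)⟩
    · exact ⟨s ++ t, mem_lcat.mpr ⟨s, hs, t, ht, rfl⟩,
        dWord_append s t a ▸ Or.inr (mem_lcat_iB.mpr ⟨hos, hu⟩)⟩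

variable (o δ) in
/-- `⟦S⟧`, the image of `S` under the final homomorphism into `P(A*)`. -/
def lang (S : Set (List X)) : Set (List A) := {w | oSet o (dSetWord o δ S w)}

lemma nil_mem_lang {S : Set (List X)} : [] ∈ lang o δ S ↔ oSet o S := Iff.rfl

lemma cons_mem_lang {S : Set (List X)} {a : A} {w : List A} :
    a :: w ∈ lang o δ S ↔ w ∈ lang o δ (dSet o δ S a) := Iff.rfl

lemma mem_lang {S : Set (List X)} {w : List A} :
    w ∈ lang o δ S ↔ ∃ s ∈ S, w ∈ lang o δ {s} := by
  induction w generalizing S with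
  | nil => simp [nil_mem_lang, oSet]
  | cons a w ih =>
    rw [cons_mem_lang, ih]
    simp only [mem_dSet, cons_mem_lang, dSet_singleton]
    constructor
    · rintro ⟨t, ⟨s, hs, ht⟩, hw⟩
      exact ⟨s, hs, ih.mpr ⟨t, ht, hw⟩⟩
    · rintro ⟨s, hs, hw⟩
      obtain ⟨t, ht, hw⟩ := ih.mp hw
      exact ⟨t, ⟨s, hs, ht⟩, hw⟩

lemma lang_empty : lang o δ (∅ : Set (List X)) = ∅ := by
  ext w
  rw [mem_lang]
  simp

lemma lang_union (S T : Set (List X)) : lang o δ (S ∪ T) = lang o δ S ∪ lang o δ T := by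
  ext w
  rw [Set.mem_union, mem_lang, mem_lang, mem_lang (S := T)]
  simp only [Set.mem_union, or_and_right, exists_or]

lemma lang_lcat_iB (p : Prop) (T : Set (List X)) :
    lang o δ (lcat (iB p) T) = {w | p ∧ w ∈ lang o δ T} := by
  by_cases hp : p
  · have : lcat (iB p) T = T := by ext; simp [mem_lcat_iB, hp]
    rw [this]; simp [hp]
  · have : lcat (iB p) T = ∅ := by ext; simp [mem_lcat_iB, hp]
    rw [this, lang_empty]; simp [hp]

lemma lang_lcat (S T : Set (List X)) :
    lang o δ (lcat S T) = lcat (lang o δ S) (lang o δ T) := by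
  ext w
  induction w generalizing S with
  | nil => simp [nil_mem_lang, oSet_lcat, mem_lcat]
  | cons a w ih =>
    rw [cons_mem_lang, dSet_lcat, lang_union, lang_lcat_iB]
    simp only [Set.mem_union, ih, Set.mem_ofPred_eq, mem_lcat, List.append_eq_cons_iff]
    constructor
    · rintro (⟨u, hu, v, hv, rfl⟩ | ⟨hS, hw⟩)
      · exact ⟨a :: u, hu, v, hv, Or.inr ⟨u, rfl, rfl⟩⟩
      · exact ⟨[], hS, a :: w, hw, Or.inl ⟨rfl, rfl⟩⟩
    · rintro ⟨_, hu, v, hv, ⟨rfl, rfl⟩ | ⟨u, rfl, rfl⟩⟩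
      · exact Or.inr ⟨hu, hv⟩
      · exact Or.inl ⟨u, hu, v, hv, rfl⟩

lemma lang_singleton_nil : lang o δ ({[]} : Set (List X)) = {[]} := by
  ext w
  cases w with
  | nil => simp [nil_mem_lang, oSet, oWord]
  | cons a w =>
    have : dSet o δ ({[]} : Set (List X)) a = ∅ := by simp [dSet_singleton, dWord]
    simp [cons_mem_lang, this, lang_empty]

lemma lang_singleton_cons (x : X) (s : List X) :
    lang o δ {x :: s} = lcat (lang o δ {[x]}) (lang o δ {s}) := by
  rw [← lang_lcat, lcat_singleton_singleton, List.singleton_append]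

lemma nil_mem_lang_singleton_singleton {x : X} : [] ∈ lang o δ {[x]} ↔ o x := by
  simp [nil_mem_lang, oSet, oWord]

lemma cons_mem_lang_singleton_singleton {x : X} {a : A} {w : List A} :
    a :: w ∈ lang o δ {[x]} ↔ w ∈ lang o δ (δ x a) := by
  rw [cons_mem_lang, dSet_singleton, dWord_singleton]

end Semantics

section Derivations

variable {X A : Type} {o : X → Prop} {δ : X → A → Set (List X)}

variable (o δ) in
def formLang : List (X ⊕ A) → Set (List A)
  | [] => {[]}
  | c :: γ => lcat (c.elim (fun x => lang o δ {[x]}) (fun a => {[a]})) (formLang γ)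

lemma formLang_append (γ γ' : List (X ⊕ A)) :
    formLang o δ (γ ++ γ') = lcat (formLang o δ γ) (formLang o δ γ') := by
  induction γ with
  | nil => simp [formLang, lcat_nil_left]
  | cons c γ ih => simp only [List.cons_append, formLang, ih, lcat_assoc]

lemma formLang_map_inl (s : List X) : formLang o δ (s.map Sum.inl) = lang o δ {s} := by
  induction s with
  | nil => simp [formLang, lang_singleton_nil]
  | cons x s ih => rw [List.map_cons, formLang, Sum.elim_inl, ih, lang_singleton_cons x s]

lemma formLang_map_inr (w : List A) : formLang o δ (w.map Sum.inr) = {w} := by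
  induction w with
  | nil => rfl
  | cons a w ih => simp [formLang, ih, lcat_singleton_singleton]

lemma formLang_subset_of_gStep {γ γ' : List (X ⊕ A)} (h : GStep o δ γ γ') :
    formLang o δ γ' ⊆ formLang o δ γ := by
  cases h with
  | eps l r x hx =>
    rw [formLang_append, formLang_append]
    refine lcat_subset_lcat subset_rfl ?_
    conv_lhs => rw [← lcat_nil_left (formLang o δ r)]
    exact lcat_subset_lcat (Set.singleton_subset_iff.mpr (nil_mem_lang_singleton_singleton.mpr hx))
      subset_rfl
  | prod l r x a w hw =>
    rw [formLang_append, formLang_append, formLang_append, lcat_assoc]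
    refine lcat_subset_lcat subset_rfl ?_
    simp only [formLang, Sum.elim_inl, Sum.elim_inr, formLang_map_inl]
    refine lcat_subset_lcat ?_ subset_rfl
    rintro _ ⟨_, rfl, v, hv, rfl⟩
    exact cons_mem_lang_singleton_singleton.mpr (mem_lang.mpr ⟨w, hw, hv⟩)

lemma mem_formLang_of_gDerives {γ : List (X ⊕ A)} {w : List A}
    (h : GDerives o δ γ (w.map Sum.inr)) : w ∈ formLang o δ γ := by
  induction h using Relation.ReflTransGen.head_induction_on with
  | refl => simp [formLang_map_inr]
  | head hstep _ ih => exact formLang_subset_of_gStep hstep ih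

lemma GStep.append_left (c : List (X ⊕ A)) {γ γ' : List (X ⊕ A)} (h : GStep o δ γ γ') :
    GStep o δ (c ++ γ) (c ++ γ') := by
  cases h with
  | eps l r x hx => simpa using GStep.eps (δ := δ) (c ++ l) r x hx
  | prod l r x a w hw => simpa using GStep.prod (o := o) (c ++ l) r x a w hw

lemma gDerives_append_left (c : List (X ⊕ A)) {γ γ' : List (X ⊕ A)}
    (h : GDerives o δ γ γ') : GDerives o δ (c ++ γ) (c ++ γ') :=
  Relation.ReflTransGen.lift _ (fun _ _ hs => hs.append_left c) _ _ h

lemma gDerives_nil_of_oWord {s : List X} (h : oWord o s) :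
    GDerives o δ (s.map Sum.inl) [] := by
  induction s with
  | nil => exact .refl
  | cons x s ih => exact .head (by simpa using GStep.eps (δ := δ) [] _ x h.1) (ih h.2)

lemma gDerives_of_mem_dWord {s t : List X} {a : A} (ht : t ∈ dWord o δ s a) :
    GDerives o δ (s.map Sum.inl) (Sum.inr a :: t.map Sum.inl) := by
  induction s generalizing t with
  | nil => simp [dWord] at ht
  | cons x s ih =>
    rcases ht with h | h
    · obtain ⟨u, hu, _, hv, rfl⟩ := mem_lcat.mp h
      rw [Set.mem_singleton_iff.mp hv]
      exact .single (by simpa using GStep.prod (o := o) [] (s.map Sum.inl) x a u hu)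
    · obtain ⟨hx, ht⟩ := mem_lcat_iB.mp h
      exact .head (by simpa using GStep.eps (δ := δ) [] (s.map Sum.inl) x hx) (ih ht)

lemma gDerives_of_mem_lang {w : List A} {s : List X} (h : w ∈ lang o δ {s}) :
    GDerives o δ (s.map Sum.inl) (w.map Sum.inr) := by
  induction w generalizing s with
  | nil => simpa using gDerives_nil_of_oWord (by simpa [nil_mem_lang, oSet] using h)
  | cons a w ih =>
    obtain ⟨t, ht, hw⟩ := mem_lang.mp (cons_mem_lang.mp h)
    rw [dSet_singleton] at ht
    exact (gDerives_of_mem_dWord ht).trans (gDerives_append_left [Sum.inr a] (ih hw))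

lemma mem_lang_singleton_iff_gDerives {s : List X} {w : List A} :
    w ∈ lang o δ {s} ↔ GDerives o δ (s.map Sum.inl) (w.map Sum.inr) :=
  ⟨gDerives_of_mem_lang, fun h => formLang_map_inl s ▸ mem_formLang_of_gDerives h⟩

end Derivations

theorem language_of_grammar_automaton_general {X A : Type}
    (o : X → Prop) (δ : X → A → Set (List X))
    (S : Set (List X)) :
    {w : List A | oSet o (dSetWord o δ S w)} =
      ⋃ s ∈ S, {w : List A | GDerives o δ (s.map Sum.inl) (w.map Sum.inr)} := by
  ext w
  simp only [Set.mem_iUnion, Set.mem_ofPred_eq, exists_prop, ← mem_lang_singleton_iff_gDerives]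
  exact mem_lang

/-- The language assigned by the final homomorphism to a finite `S ∈ P_ω(X*)`
in the grammar automaton, `⟦S⟧ = { w | ô(S_w) = 1 }`, equals
`⋃_{s ∈ S} { w ∈ A* | s ⇒* w }`. -/
theorem language_of_grammar_automaton {X A : Type} [Finite X]
    (o : X → Prop) (δ : X → A → Set (List X))
    (hfin : ∀ x a, (δ x a).Finite)
    (S : Set (List X)) (hS : S.Finite) :
    {w : List A | oSet o (dSetWord o δ S w)} =
      ⋃ s ∈ S, {w : List A | GDerives o δ (s.map Sum.inl) (w.map Sum.inr)} :=
  language_of_grammar_automaton_general o δ S
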